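/- Let α ∈ (1/2,1), T > 0, x₀ ∈ ℝ^d, and let b : ℝ^d → ℝ^d be globally Lipschitz. Suppose x : [0,T] → ℝ^d is continuous and satisfies the deterministic Volterra equation x(t) = x₀ + ∫_0^t K(t−s) b(x(s)) ds for all t ∈ [0,T]. Then there exists a constant c > 0 such that for all 0 ≤ s ≤ t ≤ T, ‖x(t) − x(s)‖ ≤ c (t−s)^α; that is, x is α-Hölder continuous on [0,T]. -/

import Mathlib

open MeasureTheory intervalIntegral Real

/-- Fractional kernel `K(u) = u^(α-1)/Γ(α)` for `u > 0`, `0` otherwise. -/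
noncomputable def Kker (α u : ℝ) : ℝ := if 0 < u then u ^ (α - 1) / Real.Gamma α else 0

/-- First-order resolvent kernel `L(u) = u^(-α)/Γ(1-α)` for `u > 0`, `0` otherwise. -/
noncomputable def Lker (α u : ℝ) : ℝ := if 0 < u then u ^ (-α) / Real.Gamma (1 - α) else 0

/-- Discretization map `φ_h(t) = h⌊t/h⌋`. -/
noncomputable def phi (h t : ℝ) : ℝ := h * (⌊t / h⌋ : ℝ)

/-- `χ_h(u) = u - φ_h(u)`. -/
noncomputable def chi (h u : ℝ) : ℝ := u - phi h u

/-- Discretized kernel `K^{(h)}`. -/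
noncomputable def Kh (α h t s : ℝ) : ℝ :=
  if 0 ≤ s ∧ s < phi h t then Kker α (phi h t - s) else 0

/-- The kernel `g^{(h)}(t,s) = ∫_s^t L(t-v) K^{(h)}(v,s) dv`. -/
noncomputable def gh (α h t s : ℝ) : ℝ := ∫ v in s..t, Lker α (t - v) * Kh α h v s

/-!
Write `x t - x s = ∫₀ˢ (K(t-u) - K(s-u)) b(x u) du + ∫ₛᵗ K(t-u) b(x u) du`. The continuous
function `b ∘ x` is bounded by some `M` on `[0,T]`, and `K` is nonincreasing for `α ≤ 1`, so the
two terms are at most `M (s^α + (t-s)^α - t^α) / Γ(α+1)` and `M (t-s)^α / Γ(α+1)`; as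
`s^α ≤ t^α`, this gives the bound with `c = 2M / Γ(α+1)`.
-/

open Set

section FractionalKernel

variable {α : ℝ}

lemma Kker_eq_indicator : Kker α = (Ioi 0).indicator fun u => u ^ (α - 1) / Gamma α := by
  ext u
  simp only [Kker, indicator, mem_Ioi]

lemma Kker_nonneg (hα : 0 < α) (u : ℝ) : 0 ≤ Kker α u := by
  have := Gamma_pos_of_pos hα
  rw [Kker_eq_indicator]
  exact indicator_nonneg (fun u (hu : 0 < u) => by positivity) u

lemma Kker_antitoneOn (hα₀ : 0 < α) (hα₁ : α ≤ 1) : AntitoneOn (Kker α) (Ioi 0) := by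
  intro u hu v hv huv
  simp only [Kker, if_pos (mem_Ioi.1 hu), if_pos (mem_Ioi.1 hv)]
  have := Gamma_pos_of_pos hα₀
  gcongr ?_ / _
  exact rpow_le_rpow_of_nonpos hu huv (by linarith)

lemma intervalIntegrable_Kker (hα : 0 < α) (a b : ℝ) :
    IntervalIntegrable (Kker α) volume a b := by
  have h := (intervalIntegrable_rpow' (a := a) (b := b) (r := α - 1) (by linarith)).div_const
    (Gamma α)
  rw [Kker_eq_indicator]
  exact ⟨h.1.indicator measurableSet_Ioi, h.2.indicator measurableSet_Ioi⟩

lemma integral_Kker (hα : 0 < α) {a b : ℝ} (ha : 0 ≤ a) (hb : 0 ≤ b) :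
    ∫ u in a..b, Kker α u = (b ^ α - a ^ α) / Gamma (α + 1) := by
  have hpos : ∀ u ∈ uIoc a b, Kker α u = u ^ (α - 1) / Gamma α := fun u hu =>
    if_pos ((le_min ha hb).trans_lt hu.1)
  rw [integral_congr_ae (Filter.Eventually.of_forall hpos), intervalIntegral.integral_div,
    integral_rpow (Or.inl (by linarith)), sub_add_cancel, Gamma_add_one hα.ne', div_div]

lemma intervalIntegrable_Kker_sub (hα : 0 < α) (t a b : ℝ) :
    IntervalIntegrable (fun u => Kker α (t - u)) volume a b := by
  simpa using (intervalIntegrable_Kker hα (t - a) (t - b)).comp_sub_left t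

lemma integral_Kker_sub (hα : 0 < α) {t a b : ℝ} (ha : a ≤ t) (hb : b ≤ t) :
    ∫ u in a..b, Kker α (t - u) = ((t - a) ^ α - (t - b) ^ α) / Gamma (α + 1) := by
  rw [integral_comp_sub_left (Kker α) t, integral_Kker hα (by linarith) (by linarith)]

end FractionalKernel

noncomputable def fracIntegral {E : Type*} [NormedAddCommGroup E] [NormedSpace ℝ E]
    (α : ℝ) (f : ℝ → E) (t : ℝ) : E :=
  ∫ s in (0 : ℝ)..t, Kker α (t - s) • f s

section FractionalIntegral

variable {E : Type*} [NormedAddCommGroup E] [NormedSpace ℝ E] {α M : ℝ} {f : ℝ → E}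

lemma intervalIntegrable_Kker_sub_smul (hα : 0 < α) {a b : ℝ} (hab : a ≤ b)
    (hfm : AEStronglyMeasurable f (volume.restrict (Ioc a b))) (hfM : ∀ u ∈ Ioc a b, ‖f u‖ ≤ M)
    (t : ℝ) : IntervalIntegrable (fun u => Kker α (t - u) • f u) volume a b := by
  have hK := intervalIntegrable_Kker_sub hα t a b
  rw [intervalIntegrable_iff_integrableOn_Ioc_of_le hab] at hK ⊢
  exact hK.smul_of_top_left
    (memLp_top_of_bound hfm M (ae_restrict_of_forall_mem measurableSet_Ioc hfM))

lemma norm_integral_Kker_sub_smul_le (hα : 0 < α) {s t : ℝ} (hst : s ≤ t)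
    (hfM : ∀ u ∈ Ioc s t, ‖f u‖ ≤ M) :
    ‖∫ u in s..t, Kker α (t - u) • f u‖ ≤ M * (t - s) ^ α / Gamma (α + 1) := by
  calc ‖∫ u in s..t, Kker α (t - u) • f u‖
      ≤ ∫ u in s..t, Kker α (t - u) * M := by
        refine norm_integral_le_of_norm_le hst (Filter.Eventually.of_forall fun u hu => ?_)
          ((intervalIntegrable_Kker_sub hα t s t).mul_const M)
        rw [norm_smul, norm_of_nonneg (Kker_nonneg hα _)]
        exact mul_le_mul_of_nonneg_left (hfM u hu) (Kker_nonneg hα _)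
    _ = M * (t - s) ^ α / Gamma (α + 1) := by
        rw [intervalIntegral.integral_mul_const, integral_Kker_sub hα hst le_rfl, sub_self,
          zero_rpow hα.ne', sub_zero]
        ring

lemma norm_integral_Kker_increment_smul_le (hα₀ : 0 < α) (hα₁ : α ≤ 1) {s t : ℝ} (hs : 0 ≤ s)
    (hst : s ≤ t) (hfM : ∀ u ∈ Ioc 0 s, ‖f u‖ ≤ M) :
    ‖∫ u in (0 : ℝ)..s, (Kker α (t - u) - Kker α (s - u)) • f u‖
      ≤ M * (s ^ α + (t - s) ^ α - t ^ α) / Gamma (α + 1) := by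
  have hpt : ∀ᵐ u, u ∈ Ioc 0 s →
      ‖(Kker α (t - u) - Kker α (s - u)) • f u‖ ≤ (Kker α (s - u) - Kker α (t - u)) * M := by
    filter_upwards [volume.ae_ne s] with u hus hu
    have hle : Kker α (t - u) ≤ Kker α (s - u) :=
      Kker_antitoneOn hα₀ hα₁ (sub_pos.2 (lt_of_le_of_ne hu.2 hus))
        (sub_pos.2 ((lt_of_le_of_ne hu.2 hus).trans_le hst)) (by linarith)
    rw [norm_smul, norm_sub_rev, norm_of_nonneg (sub_nonneg.2 hle)]
    exact mul_le_mul_of_nonneg_left (hfM u hu) (sub_nonneg.2 hle)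
  calc ‖∫ u in (0 : ℝ)..s, (Kker α (t - u) - Kker α (s - u)) • f u‖
      ≤ ∫ u in (0 : ℝ)..s, (Kker α (s - u) - Kker α (t - u)) * M :=
        norm_integral_le_of_norm_le hs hpt
          (((intervalIntegrable_Kker_sub hα₀ s 0 s).sub
            (intervalIntegrable_Kker_sub hα₀ t 0 s)).mul_const M)
    _ = M * (s ^ α + (t - s) ^ α - t ^ α) / Gamma (α + 1) := by
        rw [intervalIntegral.integral_mul_const,
          intervalIntegral.integral_sub (intervalIntegrable_Kker_sub hα₀ s 0 s)
            (intervalIntegrable_Kker_sub hα₀ t 0 s),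
          integral_Kker_sub hα₀ hs le_rfl, integral_Kker_sub hα₀ (hs.trans hst) hst]
        simp only [sub_zero, sub_self, zero_rpow hα₀.ne']
        ring

lemma fracIntegral_sub_eq {s t : ℝ} (hs : 0 ≤ s) (hst : s ≤ t)
    (hint : ∀ r, IntervalIntegrable (fun u => Kker α (r - u) • f u) volume 0 t) :
    fracIntegral α f t - fracIntegral α f s
      = (∫ u in (0 : ℝ)..s, (Kker α (t - u) - Kker α (s - u)) • f u)
        + ∫ u in s..t, Kker α (t - u) • f u := by
  have hsub : ∀ r, IntervalIntegrable (fun u => Kker α (r - u) • f u) volume 0 s := fun r =>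
    (hint r).mono_set (uIcc_subset_uIcc left_mem_uIcc (mem_uIcc_of_le hs hst))
  have hrest : IntervalIntegrable (fun u => Kker α (t - u) • f u) volume s t :=
    (hint t).mono_set (uIcc_subset_uIcc (mem_uIcc_of_le hs hst) right_mem_uIcc)
  simp only [fracIntegral, sub_smul]
  rw [← integral_add_adjacent_intervals (hsub t) hrest, integral_sub (hsub t) (hsub s)]
  abel

theorem norm_fracIntegral_sub_le (hα₀ : 0 < α) (hα₁ : α ≤ 1) {T : ℝ}
    (hfm : AEStronglyMeasurable f (volume.restrict (Icc 0 T))) (hfM : ∀ u ∈ Icc 0 T, ‖f u‖ ≤ M)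
    {s t : ℝ} (hs : 0 ≤ s) (hst : s ≤ t) (htT : t ≤ T) :
    ‖fracIntegral α f t - fracIntegral α f s‖ ≤ 2 * M / Gamma (α + 1) * (t - s) ^ α := by
  have hM : 0 ≤ M := (norm_nonneg _).trans (hfM 0 ⟨le_rfl, hs.trans (hst.trans htT)⟩)
  have hfM' : ∀ u ∈ Ioc 0 t, ‖f u‖ ≤ M := fun u hu => hfM u ⟨hu.1.le, hu.2.trans htT⟩
  have hint := intervalIntegrable_Kker_sub_smul hα₀ (hs.trans hst)
    (hfm.mono_measure (Measure.restrict_mono (Ioc_subset_Icc_self.trans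
      (Icc_subset_Icc_right htT)) le_rfl)) hfM'
  have hpow : s ^ α ≤ t ^ α := rpow_le_rpow hs hst hα₀.le
  calc ‖fracIntegral α f t - fracIntegral α f s‖
      ≤ M * (s ^ α + (t - s) ^ α - t ^ α) / Gamma (α + 1) + M * (t - s) ^ α / Gamma (α + 1) := by
        rw [fracIntegral_sub_eq hs hst hint]
        refine (norm_add_le _ _).trans (add_le_add ?_ ?_)
        · exact norm_integral_Kker_increment_smul_le hα₀ hα₁ hs hst
            fun u hu => hfM' u ⟨hu.1, hu.2.trans hst⟩
        · exact norm_integral_Kker_sub_smul_le hα₀ hst fun u hu => hfM' u ⟨hs.trans_lt hu.1, hu.2⟩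
    _ ≤ 2 * M / Gamma (α + 1) * (t - s) ^ α := by
        have hmem : M * (s ^ α + (t - s) ^ α - t ^ α) ≤ M * (t - s) ^ α :=
          mul_le_mul_of_nonneg_left (by linarith) hM
        rw [← add_div, div_mul_eq_mul_div]
        gcongr
        linarith

end FractionalIntegral

theorem deterministic_volterra_holder_general (α T : ℝ) (hα : α ∈ Set.Ioo (1/2 : ℝ) 1)
    (d : ℕ) (x₀ : EuclideanSpace ℝ (Fin d))
    (b : EuclideanSpace ℝ (Fin d) → EuclideanSpace ℝ (Fin d))
    (hb : ∃ Lip : ℝ, ∀ y z, ‖b y - b z‖ ≤ Lip * ‖y - z‖)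
    (x : ℝ → EuclideanSpace ℝ (Fin d)) (hx : ContinuousOn x (Set.Icc 0 T))
    (heq : ∀ t ∈ Set.Icc (0:ℝ) T,
      x t = x₀ + ∫ s in (0:ℝ)..t, Kker α (t - s) • b (x s)) :
    ∃ c > 0, ∀ s t : ℝ, 0 ≤ s → s ≤ t → t ≤ T →
      ‖x t - x s‖ ≤ c * (t - s) ^ α := by
  have hα₀ : 0 < α := by linarith [hα.1]
  obtain ⟨Lip, hLip⟩ := hb
  have hb_cont : Continuous b :=
    (LipschitzWith.of_dist_le' fun y z => by simpa only [dist_eq_norm] using hLip y z).continuous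
  have hbx : ContinuousOn (b ∘ x) (Icc 0 T) := hb_cont.comp_continuousOn hx
  obtain ⟨M, hM₀, hM⟩ := (isCompact_Icc.image_of_continuousOn hbx).isBounded.exists_pos_norm_le
  refine ⟨2 * M / Gamma (α + 1), by positivity, fun s t hs hst htT => ?_⟩
  rw [heq t ⟨hs.trans hst, htT⟩, heq s ⟨hs, hst.trans htT⟩, add_sub_add_left_eq_sub]
  exact norm_fracIntegral_sub_le hα₀ hα.2.le (hbx.aestronglyMeasurable measurableSet_Icc)
    (fun u hu => hM _ (mem_image_of_mem _ hu)) hs hst htT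

/-- the solution of the deterministic Volterra equation is `α`-Hölder on `[0,T]`. -/
theorem deterministic_volterra_holder (α T : ℝ) (hα : α ∈ Set.Ioo (1/2 : ℝ) 1) (hT : 0 < T)
    (d : ℕ) (x₀ : EuclideanSpace ℝ (Fin d))
    (b : EuclideanSpace ℝ (Fin d) → EuclideanSpace ℝ (Fin d))
    (hb : ∃ Lip : ℝ, ∀ y z, ‖b y - b z‖ ≤ Lip * ‖y - z‖)
    (x : ℝ → EuclideanSpace ℝ (Fin d)) (hx : ContinuousOn x (Set.Icc 0 T))
    (heq : ∀ t ∈ Set.Icc (0:ℝ) T,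
      x t = x₀ + ∫ s in (0:ℝ)..t, Kker α (t - s) • b (x s)) :
    ∃ c > 0, ∀ s t : ℝ, 0 ≤ s → s ≤ t → t ≤ T →
      ‖x t - x s‖ ≤ c * (t - s) ^ α :=
  deterministic_volterra_holder_general α T hα d x₀ b hb x hx heq
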